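/- Let Y, Y_1, …, Y_{k+1} be random variables on a finite label set that are conditionally i.i.d. given a latent state S (with finitely many states, each assigning positive probability to every label, and at least two distinct states). Then the mutual information I(Y; Y_1,…,Y_{k+1}) is strictly greater than I(Y; Y_1,…,Y_k). -/
import Mathlib


/-- Joint probability that a held-out label is `y` and `k` other raters give
labels `v`, under the latent-state model: state `s` drawn with prior `π s`,
labels conditionally i.i.d. with per-label probabilities `σ s`. -/
noncomputable def jointProb {S L : Type*} [Fintype S]
    (π : S → ℝ) (σ : S → L → ℝ) (k : ℕ) (y : L) (v : Fin k → L) : ℝ :=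
  ∑ s, π s * σ s y * ∏ i, σ s (v i)

/-- Marginal probability of the held-out label. -/
noncomputable def margY {S L : Type*} [Fintype S]
    (π : S → ℝ) (σ : S → L → ℝ) (y : L) : ℝ :=
  ∑ s, π s * σ s y

/-- Marginal probability of the `k` observed labels. -/
noncomputable def margV {S L : Type*} [Fintype S]
    (π : S → ℝ) (σ : S → L → ℝ) (k : ℕ) (v : Fin k → L) : ℝ :=
  ∑ s, π s * ∏ i, σ s (v i)

/-- Shannon mutual information `I(Y; Y_1,…,Y_k)` between the held-out label
and `k` observed labels in the latent-state model. -/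
noncomputable def mutInfo {S L : Type*} [Fintype S] [Fintype L]
    (π : S → ℝ) (σ : S → L → ℝ) (k : ℕ) : ℝ :=
  ∑ y, ∑ v : Fin k → L,
    jointProb π σ k y v *
      Real.log (jointProb π σ k y v / (margY π σ y * margV π σ k v))

private lemma gibbs {ι : Type*} [Fintype ι] (a b : ι → ℝ)
    (ha : ∀ i, 0 < a i) (hb : ∀ i, 0 < b i)
    (hab : ∑ i, a i = ∑ i, b i) (hne : ∃ i, a i ≠ b i) :
    0 < ∑ i, a i * Real.log (a i / b i) := by
  obtain ⟨i0, hi0⟩ := hne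
  have hlog : ∀ i : ι, Real.log (a i / b i) = - Real.log (b i / a i) := by
    intro i
    rw [← Real.log_inv]
    congr 1
    rw [inv_div]
  have key : ∀ i : ι, a i - b i ≤ a i * Real.log (a i / b i) := by
    intro i
    have hx : 0 < b i / a i := div_pos (hb i) (ha i)
    have h1 : Real.log (b i / a i) ≤ b i / a i - 1 := Real.log_le_sub_one_of_pos hx
    have h2 : a i * (b i / a i) = b i := mul_div_cancel₀ _ (ha i).ne'
    rw [hlog i]
    nlinarith [mul_le_mul_of_nonneg_left h1 (ha i).le]
  have keystrict : a i0 - b i0 < a i0 * Real.log (a i0 / b i0) := by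
    have hx : 0 < b i0 / a i0 := div_pos (hb i0) (ha i0)
    have hx1 : b i0 / a i0 ≠ 1 := by
      intro h
      exact hi0 ((div_eq_one_iff_eq (ha i0).ne').mp h).symm
    have h1 : Real.log (b i0 / a i0) < b i0 / a i0 - 1 := Real.log_lt_sub_one_of_pos hx hx1
    have h2 : a i0 * (b i0 / a i0) = b i0 := mul_div_cancel₀ _ (ha i0).ne'
    rw [hlog i0]
    nlinarith [mul_lt_mul_of_pos_left h1 (ha i0)]
  have hsum : ∑ i, (a i - b i) < ∑ i, a i * Real.log (a i / b i) :=
    Finset.sum_lt_sum (fun i _ => key i) ⟨i0, Finset.mem_univ i0, keystrict⟩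
  have hz : ∑ i, (a i - b i) = 0 := by rw [Finset.sum_sub_distrib, hab, sub_self]
  linarith

private lemma var_pos {S L : Type*} [Fintype S] [Fintype L]
    (p : S → ℝ) (σ : S → L → ℝ) (hp : ∀ s, 0 < p s)
    (s0 t0 : S) (hst : σ s0 ≠ σ t0) :
    0 < ∑ y, ((∑ s, p s * (σ s y * σ s y)) * (∑ s, p s)
      - (∑ s, p s * σ s y) * (∑ s, p s * σ s y)) := by
  set F : S → S → ℝ := fun s t => ∑ y, p s * p t * (σ s y * (σ s y - σ t y)) with hF
  have e1 : ∑ y, ((∑ s, p s * (σ s y * σ s y)) * (∑ s, p s)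
      - (∑ s, p s * σ s y) * (∑ s, p s * σ s y))
      = ∑ y : L, ∑ s, ∑ t, p s * p t * (σ s y * (σ s y - σ t y)) := by
    refine Finset.sum_congr rfl fun y _ => ?_
    rw [Finset.sum_mul_sum, Finset.sum_mul_sum, ← Finset.sum_sub_distrib]
    refine Finset.sum_congr rfl fun s _ => ?_
    rw [← Finset.sum_sub_distrib]
    exact Finset.sum_congr rfl fun t _ => by ring
  have e2 : (∑ y : L, ∑ s, ∑ t, p s * p t * (σ s y * (σ s y - σ t y)))
      = ∑ s, ∑ t, F s t := by
    rw [Finset.sum_comm]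
    exact Finset.sum_congr rfl fun s _ => Finset.sum_comm
  rw [e1, e2]
  have hsymm : ∑ s, ∑ t, F s t = ∑ s, ∑ t, F t s := Finset.sum_comm
  have h2T : (∑ s, ∑ t, F s t) + (∑ s, ∑ t, F s t)
      = ∑ s, ∑ t, (p s * p t * ∑ y, (σ s y - σ t y) ^ 2) := by
    nth_rewrite 2 [hsymm]
    rw [← Finset.sum_add_distrib]
    refine Finset.sum_congr rfl fun s _ => ?_
    rw [← Finset.sum_add_distrib]
    refine Finset.sum_congr rfl fun t _ => ?_
    rw [hF]
    rw [← Finset.sum_add_distrib, Finset.mul_sum]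
    exact Finset.sum_congr rfl fun y _ => by ring
  have hGnn : ∀ s t : S, 0 ≤ p s * p t * ∑ y, (σ s y - σ t y) ^ 2 := by
    intro s t
    have h : 0 ≤ ∑ y, (σ s y - σ t y) ^ 2 := Finset.sum_nonneg fun y _ => sq_nonneg _
    exact mul_nonneg (mul_nonneg (hp s).le (hp t).le) h
  have hGpos : 0 < p s0 * p t0 * ∑ y, (σ s0 y - σ t0 y) ^ 2 := by
    have : ∃ y, σ s0 y ≠ σ t0 y := by
      by_contra h; push_neg at h; exact hst (funext h)
    obtain ⟨y0, hy0⟩ := this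
    have hy0' : (0:ℝ) < (σ s0 y0 - σ t0 y0) ^ 2 := by
      have := sub_ne_zero.mpr hy0
      positivity
    have : 0 < ∑ y, (σ s0 y - σ t0 y) ^ 2 :=
      Finset.sum_pos' (fun y _ => sq_nonneg _) ⟨y0, Finset.mem_univ _, hy0'⟩
    have := hp s0; have := hp t0
    positivity
  have hpos : 0 < ∑ s, ∑ t, (p s * p t * ∑ y, (σ s y - σ t y) ^ 2) :=
    Finset.sum_pos' (fun s _ => Finset.sum_nonneg fun t _ => hGnn s t)
      ⟨s0, Finset.mem_univ _, Finset.sum_pos' (fun t _ => hGnn s0 t)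
        ⟨t0, Finset.mem_univ _, hGpos⟩⟩
  linarith

private lemma step {S L : Type*} [Fintype S] [Fintype L]
    (p : S → ℝ) (σ : S → L → ℝ) (hp : ∀ s, 0 < p s)
    (hσ : ∀ s ℓ, 0 < σ s ℓ) (hσsum : ∀ s, ∑ ℓ, σ s ℓ = 1)
    (s0 t0 : S) (hst : σ s0 ≠ σ t0) :
    0 < ∑ q : L × L, (∑ s, p s * (σ s q.1 * σ s q.2)) *
        Real.log ((∑ s, p s * (σ s q.1 * σ s q.2)) * (∑ s, p s)
          / ((∑ s, p s * σ s q.1) * (∑ s, p s * σ s q.2))) := by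
  have hSne : (Finset.univ : Finset S).Nonempty := ⟨s0, Finset.mem_univ _⟩
  set M : ℝ := ∑ s, p s with hM
  set J : L → ℝ := fun y => ∑ s, p s * σ s y with hJ
  set A : L × L → ℝ := fun q => ∑ s, p s * (σ s q.1 * σ s q.2) with hA
  have hMpos : 0 < M := Finset.sum_pos (fun s _ => hp s) hSne
  have hJpos : ∀ y, 0 < J y :=
    fun y => Finset.sum_pos (fun s _ => mul_pos (hp s) (hσ s y)) hSne
  have hApos : ∀ q : L × L, 0 < A q :=
    fun q => Finset.sum_pos (fun s _ => mul_pos (hp s) (mul_pos (hσ s q.1) (hσ s q.2))) hSne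
  set B : L × L → ℝ := fun q => J q.1 * J q.2 / M with hB
  have hBpos : ∀ q : L × L, 0 < B q :=
    fun q => div_pos (mul_pos (hJpos q.1) (hJpos q.2)) hMpos
  -- row sums of A
  have hArow : ∀ y : L, ∑ y' : L, A (y, y') = J y := by
    intro y
    rw [hA]
    simp only
    rw [Finset.sum_comm]
    refine Finset.sum_congr rfl fun s _ => ?_
    calc ∑ y' : L, p s * (σ s y * σ s y') = (p s * σ s y) * ∑ y' : L, σ s y' := by
          rw [Finset.mul_sum]; exact Finset.sum_congr rfl fun _ _ => by ring
      _ = p s * σ s y := by rw [hσsum s, mul_one]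
  have hJsum : ∑ y : L, J y = M := by
    rw [hJ, hM]
    simp only
    rw [Finset.sum_comm]
    refine Finset.sum_congr rfl fun s _ => ?_
    rw [← Finset.mul_sum, hσsum s, mul_one]
  have hAsum : ∑ q : L × L, A q = M := by
    rw [Fintype.sum_prod_type]
    calc ∑ y : L, ∑ y' : L, A (y, y') = ∑ y : L, J y :=
          Finset.sum_congr rfl fun y _ => hArow y
      _ = M := hJsum
  have hBsum : ∑ q : L × L, B q = M := by
    rw [Fintype.sum_prod_type]
    have : ∀ y : L, ∑ y' : L, B (y, y') = J y := by
      intro y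
      rw [hB]
      simp only
      rw [← Finset.sum_div, ← Finset.mul_sum, hJsum, mul_div_assoc, div_self hMpos.ne', mul_one]
    calc ∑ y : L, ∑ y' : L, B (y, y') = ∑ y : L, J y :=
          Finset.sum_congr rfl fun y _ => this y
      _ = M := hJsum
  have hne : ∃ q : L × L, A q ≠ B q := by
    by_contra h
    push_neg at h
    have hz : ∀ y : L, (∑ s, p s * (σ s y * σ s y)) * (∑ s, p s)
        - (∑ s, p s * σ s y) * (∑ s, p s * σ s y) = 0 := by
      intro y
      have h1 := h (y, y)
      have : A (y, y) = J y * J y / M := h1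
      have h2 : A (y, y) * M = J y * J y := by
        rw [this, div_mul_cancel₀ _ hMpos.ne']
      have hAyy : A (y, y) = ∑ s, p s * (σ s y * σ s y) := rfl
      have hJy : J y = ∑ s, p s * σ s y := rfl
      rw [← hAyy, ← hJy, ← hM, h2, sub_self]
    have hpos := var_pos p σ hp s0 t0 hst
    rw [Finset.sum_congr rfl (fun y _ => hz y)] at hpos
    simp at hpos
  have hgibbs := gibbs A B hApos hBpos (hAsum.trans hBsum.symm) hne
  have harg : ∀ q : L × L, A q / B q = A q * M / (J q.1 * J q.2) := by
    intro q
    rw [hB]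
    simp only
    rw [div_div_eq_mul_div]
  calc (0:ℝ) < ∑ q : L × L, A q * Real.log (A q / B q) := hgibbs
    _ = ∑ q : L × L, A q * Real.log (A q * M / (J q.1 * J q.2)) :=
        Finset.sum_congr rfl fun q _ => by rw [harg q]

private def snocEquiv (k : ℕ) (L : Type*) : ((Fin k → L) × L) ≃ (Fin (k + 1) → L) where
  toFun q := Fin.snoc q.1 q.2
  invFun f := (Fin.init f, f (Fin.last k))
  left_inv q := by simp [Fin.init_snoc, Fin.snoc_last]
  right_inv f := by simp [Fin.snoc_init_self]

/-- Labels conditionally i.i.d. given a latent state with finitely many states,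
each state assigning positive probability to every label, at least two distinct
states (with positive prior): the mutual information between a held-out label
and `k+1` observed labels is strictly greater than with `k` observed labels. -/
theorem stmt_5 {S L : Type*} [Fintype S] [Fintype L] [Nonempty L]
    (π : S → ℝ) (σ : S → L → ℝ)
    (hπ : ∀ s, 0 < π s) (hπsum : ∑ s, π s = 1)
    (hσ : ∀ s ℓ, 0 < σ s ℓ) (hσsum : ∀ s, ∑ ℓ, σ s ℓ = 1)
    (hdistinct : ∃ s s' : S, σ s ≠ σ s') (k : ℕ) :
    mutInfo π σ k < mutInfo π σ (k + 1) := by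
  obtain ⟨s0, t0, hst⟩ := hdistinct
  have hSne : (Finset.univ : Finset S).Nonempty := ⟨s0, Finset.mem_univ _⟩
  set P : (Fin k → L) → S → ℝ := fun v s => π s * ∏ i, σ s (v i) with hPdef
  have hPpos : ∀ v s, 0 < P v s :=
    fun v s => mul_pos (hπ s) (Finset.prod_pos fun i _ => hσ s (v i))
  set Q : (Fin k → L) → L → L → ℝ := fun v y y' => ∑ s, P v s * (σ s y * σ s y') with hQdef
  set J : (Fin k → L) → L → ℝ := fun v y => ∑ s, P v s * σ s y with hJdef
  set M : (Fin k → L) → ℝ := fun v => ∑ s, P v s with hMdef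
  have f1 : ∀ (v : Fin k → L) (y y' : L),
      jointProb π σ (k+1) y (Fin.snoc v y') = Q v y y' := by
    intro v y y'
    rw [jointProb, hQdef]
    refine Finset.sum_congr rfl fun s _ => ?_
    rw [Fin.prod_univ_castSucc]
    simp only [Fin.snoc_castSucc, Fin.snoc_last, hPdef]
    ring
  have f2 : ∀ (v : Fin k → L) (y' : L),
      margV π σ (k+1) (Fin.snoc v y') = J v y' := by
    intro v y'
    rw [margV, hJdef]
    refine Finset.sum_congr rfl fun s _ => ?_
    rw [Fin.prod_univ_castSucc]
    simp only [Fin.snoc_castSucc, Fin.snoc_last, hPdef]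
    ring
  have f3 : ∀ (v : Fin k → L) (y : L), jointProb π σ k y v = J v y := by
    intro v y
    rw [jointProb, hJdef]
    exact Finset.sum_congr rfl fun s _ => by simp only [hPdef]; ring
  have f4 : ∀ v : Fin k → L, margV π σ k v = M v := fun v => rfl
  have f5 : ∀ (v : Fin k → L) (y : L), ∑ y' : L, Q v y y' = J v y := by
    intro v y
    simp only [hQdef, hJdef]
    rw [Finset.sum_comm]
    refine Finset.sum_congr rfl fun s _ => ?_
    calc ∑ y' : L, P v s * (σ s y * σ s y') = (P v s * σ s y) * ∑ y' : L, σ s y' := by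
          rw [Finset.mul_sum]; exact Finset.sum_congr rfl fun _ _ => by ring
      _ = P v s * σ s y := by rw [hσsum s, mul_one]
  have hMpos : ∀ v, 0 < M v := fun v => Finset.sum_pos (fun s _ => hPpos v s) hSne
  have hJpos : ∀ v y, 0 < J v y :=
    fun v y => Finset.sum_pos (fun s _ => mul_pos (hPpos v s) (hσ s y)) hSne
  have hQpos : ∀ v y y', 0 < Q v y y' :=
    fun v y y' => Finset.sum_pos
      (fun s _ => mul_pos (hPpos v s) (mul_pos (hσ s y) (hσ s y'))) hSne
  have hYpos : ∀ y, 0 < margY π σ y :=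
    fun y => Finset.sum_pos (fun s _ => mul_pos (hπ s) (hσ s y)) hSne
  have h1 : mutInfo π σ (k+1) = ∑ v : Fin k → L, ∑ q : L × L,
      Q v q.1 q.2 * Real.log (Q v q.1 q.2 / (margY π σ q.1 * J v q.2)) := by
    rw [mutInfo]
    have hy : ∀ y : L, ∑ v' : Fin (k+1) → L,
        jointProb π σ (k+1) y v' *
          Real.log (jointProb π σ (k+1) y v' / (margY π σ y * margV π σ (k+1) v'))
        = ∑ v : Fin k → L, ∑ y' : L,
          Q v y y' * Real.log (Q v y y' / (margY π σ y * J v y')) := by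
      intro y
      rw [← Equiv.sum_comp (snocEquiv k L), Fintype.sum_prod_type]
      refine Finset.sum_congr rfl fun v _ => Finset.sum_congr rfl fun y' _ => ?_
      have he : snocEquiv k L (v, y') = Fin.snoc v y' := rfl
      rw [he, f1, f2]
    rw [Finset.sum_congr rfl fun y _ => hy y, Finset.sum_comm]
    refine Finset.sum_congr rfl fun v _ => ?_
    rw [Fintype.sum_prod_type]
  have h2 : mutInfo π σ k = ∑ v : Fin k → L, ∑ q : L × L,
      Q v q.1 q.2 * Real.log (J v q.1 / (margY π σ q.1 * M v)) := by
    rw [mutInfo]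
    have hy : ∀ y : L, ∀ v : Fin k → L,
        jointProb π σ k y v *
          Real.log (jointProb π σ k y v / (margY π σ y * margV π σ k v))
        = ∑ y' : L, Q v y y' * Real.log (J v y / (margY π σ y * M v)) := by
      intro y v
      rw [f3, f4, ← Finset.sum_mul, f5]
    rw [Finset.sum_congr rfl fun y _ => Finset.sum_congr rfl fun v _ => hy y v,
      Finset.sum_comm]
    refine Finset.sum_congr rfl fun v _ => ?_
    rw [Fintype.sum_prod_type]
  have hmain : mutInfo π σ (k+1) - mutInfo π σ k = ∑ v : Fin k → L, ∑ q : L × L,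
      Q v q.1 q.2 * Real.log (Q v q.1 q.2 * M v / (J v q.1 * J v q.2)) := by
    rw [h1, h2, ← Finset.sum_sub_distrib]
    refine Finset.sum_congr rfl fun v _ => ?_
    rw [← Finset.sum_sub_distrib]
    refine Finset.sum_congr rfl fun q _ => ?_
    rw [← mul_sub]
    congr 1
    have hQ0 := (hQpos v q.1 q.2).ne'
    have hJ10 := (hJpos v q.1).ne'
    have hJ20 := (hJpos v q.2).ne'
    have hM0 := (hMpos v).ne'
    have hY0 := (hYpos q.1).ne'
    have harg : Q v q.1 q.2 * M v / (J v q.1 * J v q.2)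
        = (Q v q.1 q.2 / (margY π σ q.1 * J v q.2)) / (J v q.1 / (margY π σ q.1 * M v)) := by
      field_simp
    rw [harg, Real.log_div
      (div_ne_zero hQ0 (mul_ne_zero hY0 hJ20))
      (div_ne_zero hJ10 (mul_ne_zero hY0 hM0))]
  have hstep : ∀ v : Fin k → L, 0 < ∑ q : L × L,
      Q v q.1 q.2 * Real.log (Q v q.1 q.2 * M v / (J v q.1 * J v q.2)) :=
    fun v => step (P v) σ (hPpos v) hσ hσsum s0 t0 hst
  have hpos : 0 < mutInfo π σ (k+1) - mutInfo π σ k := by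
    rw [hmain]
    exact Finset.sum_pos (fun v _ => hstep v) Finset.univ_nonempty
  linarith
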